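/- Let R be a commutative Noetherian ring, let C be a chain complex 0 → C_m → ⋯ → C_0 → 0 of finitely generated free R-modules, and let 𝔭 ⊆ 𝔮 be prime ideals of R. Define b_i(C,𝔭) = dim over Frac(R/𝔭) of H_i(C ⊗_R Frac(R/𝔭)), and similarly for 𝔮, and set P_{C,𝔭}(λ) = Σ_i b_i(C,𝔭) λ^i. Then P_{C,𝔮}(λ) − P_{C,𝔭}(λ) = (1+λ)T(λ) for some polynomial T with non-negative integer coefficients. -/

import Mathlib

/-!
Over a field, `b_{i+1} = n_{i+1} - rk d_i - rk d_{i+1}` and `b_0 = n_0 - rk d_0`, where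
`d_i : C_{i+1} → C_i`. Specialising from `𝔭` to `𝔮` can only lower the rank of a matrix: a
minor that is nonzero modulo `𝔮` is nonzero modulo `𝔭`. Writing `e_i ≥ 0` for the drop in
rank of `d_i`, the Betti numbers grow by `e_0` in degree `0` and by `e_i + e_{i+1}` in
degree `i + 1`, which is the coefficient sequence of `(1 + λ) ∑ e_i λ^i`.
-/

open Polynomial

/-- The `i`-th Betti number of a finitely generated free chain complex (encoded by
ranks `n i` and differential matrices `d i : C_{i+1} → C_i`) after extending scalars
along a ring homomorphism `ρ : R →+* F` to a field `F`:
`dim H_i = dim ker(d out of C_i) − rank(d into C_i)`. -/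
noncomputable def chainBetti {R F : Type*} [CommRing R] [Field F] (ρ : R →+* F)
    (n : ℕ → ℕ) (d : ∀ i, Matrix (Fin (n i)) (Fin (n (i + 1))) R) : ℕ → ℕ
  | 0 => n 0 - ((d 0).map ρ).rank
  | (i + 1) => n (i + 1) - ((d i).map ρ).rank - ((d (i + 1)).map ρ).rank

namespace Matrix

variable {F : Type*} [Field F] {p q : Type*} [Fintype p] [Fintype q]

theorem exists_linearIndependent_rows_of_rank_eq (A : Matrix p q F) {k : ℕ} (hk : A.rank = k) :
    ∃ r : Fin k → p, LinearIndependent F (A.submatrix r id).row := by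
  obtain ⟨κ, a, ha, hspan, hli⟩ := exists_linearIndependent' F A.row
  have : Fintype κ := Fintype.ofInjective a ha
  have hcard : Fintype.card κ = k := by
    rw [← hk, rank_eq_finrank_span_row, ← hspan, finrank_span_eq_card hli]
  let e := Fintype.equivFinOfCardEq hcard
  exact ⟨a ∘ e.symm, hli.comp e.symm e.symm.injective⟩

theorem exists_submatrix_det_ne_zero (A : Matrix p q F) :
    ∃ r : Fin A.rank → p, ∃ c : Fin A.rank → q, (A.submatrix r c).det ≠ 0 := by
  obtain ⟨r, hr⟩ := A.exists_linearIndependent_rows_of_rank_eq rfl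
  have hrank : (A.submatrix r id)ᵀ.rank = A.rank := by
    rw [rank_transpose, LinearIndependent.rank_matrix hr, Fintype.card_fin]
  obtain ⟨c, hc⟩ := (A.submatrix r id)ᵀ.exists_linearIndependent_rows_of_rank_eq hrank
  have hunit : IsUnit (A.submatrix r c)ᵀ := linearIndependent_rows_iff_isUnit.mp hc
  exact ⟨r, c, by rw [← det_transpose]; exact ((isUnit_iff_isUnit_det _).mp hunit).ne_zero⟩

theorem rank_map_le_of_ker_le {R L : Type*} [CommRing R] [Field L] (M : Matrix p q R)
    {φ : R →+* F} {ψ : R →+* L} (h : RingHom.ker φ ≤ RingHom.ker ψ) :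
    (M.map ψ).rank ≤ (M.map φ).rank := by
  obtain ⟨r, c, hψ⟩ := (M.map ψ).exists_submatrix_det_ne_zero
  have hφ : ((M.map φ).submatrix r c).det ≠ 0 := by
    rw [submatrix_map, ← RingHom.mapMatrix_apply, ← RingHom.map_det] at hψ ⊢
    exact fun h0 => hψ (h h0)
  calc (M.map ψ).rank = ((M.map φ).submatrix r c).rank := by
        rw [rank_of_det_ne_zero hφ, Fintype.card_fin]
    _ ≤ (M.map φ).rank := rank_submatrix_le _ _ _

end Matrix

theorem Ideal.ker_algebraMap_fractionRing_comp_mk {R : Type*} [CommRing R] (𝔭 : Ideal R)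
    [𝔭.IsPrime] :
    RingHom.ker ((algebraMap (R ⧸ 𝔭) (FractionRing (R ⧸ 𝔭))).comp (Ideal.Quotient.mk 𝔭)) = 𝔭 := by
  rw [RingHom.ker_comp_of_injective _ (IsFractionRing.injective _ _), Ideal.mk_ker]

section chainBetti

variable {R F : Type*} [CommRing R] [Field F] (ρ : R →+* F)
  {n : ℕ → ℕ} {d : ∀ i, Matrix (Fin (n i)) (Fin (n (i + 1))) R}

theorem chainBetti_zero_eq : (chainBetti ρ n d 0 : ℤ) = n 0 - ((d 0).map ρ).rank := by
  have := ((d 0).map ρ).rank_le_card_height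
  simp only [Fintype.card_fin] at this
  simp only [chainBetti]
  omega

theorem chainBetti_succ_eq (hd : ∀ i, d i * d (i + 1) = 0) (i : ℕ) :
    (chainBetti ρ n d (i + 1) : ℤ) =
      n (i + 1) - ((d i).map ρ).rank - ((d (i + 1)).map ρ).rank := by
  have hmul : (d i).map ρ * (d (i + 1)).map ρ = 0 := by
    rw [← Matrix.map_mul, hd i, Matrix.map_zero _ (map_zero ρ)]
  have := Matrix.rank_add_rank_le_card_of_mul_eq_zero hmul
  simp only [Fintype.card_fin] at this
  simp only [chainBetti]
  omega

end chainBetti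

theorem Polynomial.sum_range_C_mul_X_pow_add_eq_one_add_X_mul {S : Type*} [CommSemiring S]
    {e f : ℕ → S} (h0 : f 0 = e 0) (hsucc : ∀ i, f (i + 1) = e i + e (i + 1)) (m : ℕ) :
    ∑ i ∈ Finset.range (m + 1), C (f i) * X ^ i + C (e m) * X ^ (m + 1) =
      (1 + X) * ∑ i ∈ Finset.range (m + 1), C (e i) * X ^ i := by
  induction m with
  | zero => simp only [zero_add, Finset.range_one, Finset.sum_singleton, h0]; ring
  | succ m ih =>
    rw [Finset.sum_range_succ, Finset.sum_range_succ _ (m + 1), mul_add, ← ih, hsucc, map_add]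
    ring

theorem morse_inequalities_for_prime_ideals_general {R : Type*} [CommRing R]
    (m : ℕ) (n : ℕ → ℕ) (hn : ∀ i, m < i → n i = 0)
    (d : ∀ i, Matrix (Fin (n i)) (Fin (n (i + 1))) R)
    (hd : ∀ i, d i * d (i + 1) = 0)
    (𝔭 𝔮 : Ideal R) [𝔭.IsPrime] [𝔮.IsPrime] (hpq : 𝔭 ≤ 𝔮) :
    ∃ T : Polynomial ℤ, (∀ i, 0 ≤ T.coeff i) ∧
      (∑ i ∈ Finset.range (m + 1),
          (C ((chainBetti ((algebraMap (R ⧸ 𝔮) (FractionRing (R ⧸ 𝔮))).comp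
            (Ideal.Quotient.mk 𝔮)) n d i : ℤ)) * X ^ i))
      - (∑ i ∈ Finset.range (m + 1),
          (C ((chainBetti ((algebraMap (R ⧸ 𝔭) (FractionRing (R ⧸ 𝔭))).comp
            (Ideal.Quotient.mk 𝔭)) n d i : ℤ)) * X ^ i))
      = (1 + X) * T := by
  set φ := (algebraMap (R ⧸ 𝔭) (FractionRing (R ⧸ 𝔭))).comp (Ideal.Quotient.mk 𝔭)
  set ψ := (algebraMap (R ⧸ 𝔮) (FractionRing (R ⧸ 𝔮))).comp (Ideal.Quotient.mk 𝔮)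
  set e : ℕ → ℤ := fun i => ((d i).map φ).rank - ((d i).map ψ).rank
  have he : ∀ i, 0 ≤ e i := fun i => sub_nonneg.mpr <| Nat.cast_le.mpr <|
    (d i).rank_map_le_of_ker_le <| by
      rw [Ideal.ker_algebraMap_fractionRing_comp_mk, Ideal.ker_algebraMap_fractionRing_comp_mk]
      exact hpq
  have hem : e m = 0 := by
    have hwidth := hn (m + 1) m.lt_succ_self
    have hφ := ((d m).map φ).rank_le_card_width
    have hψ := ((d m).map ψ).rank_le_card_width
    simp only [Fintype.card_fin, hwidth, Nat.le_zero] at hφ hψ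
    simp only [e, hφ, hψ, sub_self]
  refine ⟨∑ i ∈ Finset.range (m + 1), C (e i) * X ^ i, fun j => ?_, ?_⟩
  · simp only [finsetSum_coeff, coeff_C_mul_X_pow]
    exact Finset.sum_nonneg fun i _ => by split_ifs <;> simp [he]
  · rw [← Finset.sum_sub_distrib, ← Polynomial.sum_range_C_mul_X_pow_add_eq_one_add_X_mul
      (f := fun i => (chainBetti ψ n d i : ℤ) - chainBetti φ n d i) _ _ m, hem, map_zero,
      zero_mul, add_zero]
    · exact Finset.sum_congr rfl fun i _ => by rw [map_sub, sub_mul]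
    · simp only [chainBetti_zero_eq, e]; ring
    · intro i; simp only [chainBetti_succ_eq _ hd, e]; ring

/-- for a finitely generated free chain complex `C` over a commutative
Noetherian ring `R` and prime ideals `𝔭 ⊆ 𝔮`, the Poincaré polynomial of `C` at `𝔮`
dominates the one at `𝔭`: their difference is `(1+λ)·T` with `T` having non-negative
integer coefficients. -/
theorem morse_inequalities_for_prime_ideals {R : Type*} [CommRing R] [IsNoetherianRing R]
    (m : ℕ) (n : ℕ → ℕ) (hn : ∀ i, m < i → n i = 0)
    (d : ∀ i, Matrix (Fin (n i)) (Fin (n (i + 1))) R)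
    (hd : ∀ i, d i * d (i + 1) = 0)
    (𝔭 𝔮 : Ideal R) [𝔭.IsPrime] [𝔮.IsPrime] (hpq : 𝔭 ≤ 𝔮) :
    ∃ T : Polynomial ℤ, (∀ i, 0 ≤ T.coeff i) ∧
      (∑ i ∈ Finset.range (m + 1),
          (C ((chainBetti ((algebraMap (R ⧸ 𝔮) (FractionRing (R ⧸ 𝔮))).comp
            (Ideal.Quotient.mk 𝔮)) n d i : ℤ)) * X ^ i))
      - (∑ i ∈ Finset.range (m + 1),
          (C ((chainBetti ((algebraMap (R ⧸ 𝔭) (FractionRing (R ⧸ 𝔭))).comp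
            (Ideal.Quotient.mk 𝔭)) n d i : ℤ)) * X ^ i))
      = (1 + X) * T :=
  morse_inequalities_for_prime_ideals_general m n hn d hd 𝔭 𝔮 hpq
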